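/- arXiv:2601.06625 — 4 statements merged into one kernel-verified Lean document; each statement's English description precedes it below -/
import Mathlib

section
/- Let p ∈ ℕ₀ and u ∈ H¹(Ω), with π_p u the L² projection of u onto polynomials of degree ≤ p. Then |(u − π_p u)(±1)|² ≤ (2(p+1))/((2p+1)(2p+3)) · |u|₁². In particular, since 2(p+1)/(2p+3) < 1, also |(u − π_p u)(±1)|² ≤ (1/(2p+1)) · |u|₁². -/
open MeasureTheory Polynomial

noncomputable section

/-- The Legendre polynomial of degree `n`, via Rodrigues' formula. -/
def leg (n : ℕ) : Polynomial ℝ :=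
  ((1 : ℝ) / (2 ^ n * n.factorial)) • derivative^[n] ((X ^ 2 - 1) ^ n)

/-- The closed interval `Ω̄ = [-1, 1]`. -/
def Iom : Set ℝ := Set.Icc (-1 : ℝ) 1

/-- Squared `L²(Ω)` norm. -/
def nsq (f : ℝ → ℝ) : ℝ := ∫ x in Iom, f x ^ 2

/-- The `L²(Ω)` inner product. -/
def ip (f g : ℝ → ℝ) : ℝ := ∫ x in Iom, f x * g x

/-- Membership in the Sobolev space `H^k(Ω)` (strong form). -/
def MemH (k : ℕ) (w : ℝ → ℝ) : Prop := ContDiffOn ℝ k w Iom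

/-- The squared Sobolev seminorm `|w|_k² = ‖w^{(k)}‖₀²`. -/
def semSq (k : ℕ) (w : ℝ → ℝ) : ℝ := nsq (iteratedDerivWithin k w Iom)

/-- `P` coincides with a polynomial of degree `≤ p`. -/
def IsPolyDeg (p : ℕ) (P : ℝ → ℝ) : Prop :=
  ∃ q : Polynomial ℝ, q.natDegree ≤ p ∧ ∀ x, P x = q.eval x

/-- `P = π_p w` is the `L²(Ω)` projection of `w` onto polynomials of degree `≤ p`. -/
def IsL2Proj (p : ℕ) (w P : ℝ → ℝ) : Prop :=
  IsPolyDeg p P ∧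
    ∀ v : Polynomial ℝ, v.natDegree ≤ p → ∫ x in Iom, (P x - w x) * v.eval x = 0

/-- `ψ_{i,n}`: the `n`-th primitive of the Legendre polynomial `L_i`. -/
def psi (i : ℕ) : ℕ → ℝ → ℝ
  | 0 => fun x => (leg i).eval x
  | n + 1 => fun x => ∫ t in (-1 : ℝ)..x, psi i n t

/-- `f ∈ Λ_i^j = span{L_i, …, L_j}`. -/
def inLegSpan (i j : ℕ) (f : ℝ → ℝ) : Prop :=
  ∃ c : ℕ → ℝ, ∀ x, f x = ∑ m ∈ Finset.Icc i j, c m * (leg m).eval x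

/-- The defining properties of `q_{p,ν}`. -/
def IsQ (p ν : ℕ) (q : ℝ → ℝ) : Prop :=
  inLegSpan (p - ν) (p + ν + 1) q ∧ q 1 = 1 ∧ q (-1) = 0 ∧
    ∀ i, 1 ≤ i → i ≤ ν → iteratedDeriv i q 1 = 0 ∧ iteratedDeriv i q (-1) = 0

/-- Recursive construction of `q_{p,ν}`. -/
def qrec (p : ℕ) : ℕ → ℝ → ℝ
  | 0 => fun x => ((leg p).eval x + (leg (p + 1)).eval x) / 2
  | ν + 1 => fun x =>
      qrec p ν x
        + (-(iteratedDeriv (ν + 1) (qrec p ν) 1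
              + (-1 : ℝ) ^ p * iteratedDeriv (ν + 1) (qrec p ν) (-1)) / 2) * psi p (ν + 1) x
        + (-(iteratedDeriv (ν + 1) (qrec p ν) 1
              - (-1 : ℝ) ^ p * iteratedDeriv (ν + 1) (qrec p ν) (-1)) / 2) * psi (p + 1) (ν + 1) x

/-- The coefficient `α_{p,ν}` of the recursive construction. -/
def alphaC (p ν : ℕ) : ℝ :=
  -(iteratedDeriv ν (qrec p (ν - 1)) 1 + (-1 : ℝ) ^ p * iteratedDeriv ν (qrec p (ν - 1)) (-1)) / 2

/-- The coefficient `β_{p,ν}` of the recursive construction. -/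
def betaC (p ν : ℕ) : ℝ :=
  -(iteratedDeriv ν (qrec p (ν - 1)) 1 - (-1 : ℝ) ^ p * iteratedDeriv ν (qrec p (ν - 1)) (-1)) / 2

end

/-! Integrating by parts against a polynomial `q` of degree `≤ p + 1` that is `L²`-orthogonal to
`𝒫_{p-1}` gives `(u - π_p u)(1) q(1) - (u - π_p u)(-1) q(-1) = ∫ u' q`: the term `∫ (u - π_p u) q'`
vanishes because `q' ∈ 𝒫_p`, and `∫ (π_p u)' q` because `(π_p u)' ∈ 𝒫_{p-1}`. For
`q = ±(L_p ± L_{p+1}) / 2`, which is `1` at one endpoint and `0` at the other, Cauchy–Schwarz gives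
`|(u - π_p u)(±1)|² ≤ ‖q‖² |u|₁²`, and by Legendre orthogonality
`‖q‖² = (2 / (2p+1) + 2 / (2p+3)) / 4 = 2(p+1) / ((2p+1)(2p+3))`. -/

open Set

section Rodrigues

variable {R : Type*} [CommRing R]

lemma X_sq_sub_one_eq_mul : (X ^ 2 - 1 : R[X]) = (X - C 1) * (X - C (-1)) := by
  simp only [map_one, map_neg]
  ring

lemma eval_iterate_derivative_X_sq_sub_one_pow_of_lt {n k : ℕ} (hk : k < n) {c : R}
    (hc : c = 1 ∨ c = -1) : (derivative^[k] ((X ^ 2 - 1 : R[X]) ^ n)).eval c = 0 := by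
  have hdvd : (X - C c) ^ n ∣ (X ^ 2 - 1 : R[X]) ^ n := by
    refine pow_dvd_pow_of_dvd ?_ n
    rw [X_sq_sub_one_eq_mul]
    rcases hc with rfl | rfl
    · exact dvd_mul_right _ _
    · exact dvd_mul_left _ _
  obtain ⟨r, hr⟩ := pow_sub_dvd_iterate_derivative_of_pow_dvd k hdvd
  simp [hr, zero_pow (Nat.sub_ne_zero_of_lt hk)]

lemma eval_iterate_derivative_pow_mul_pow_self (n : ℕ) (a b : R) :
    (derivative^[n] ((X - C a) ^ n * (X - C b) ^ n)).eval a = n.factorial * (a - b) ^ n := by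
  rw [iterate_derivative_mul, eval_finsetSum, Finset.sum_eq_single 0]
  · simp [iterate_derivative_X_sub_pow_self]
  · intro k hk hk0
    rw [iterate_derivative_X_sub_pow]
    have : n - (n - k) ≠ 0 := by grind
    simp [zero_pow this]
  · simp

lemma monic_X_sq_sub_one : (X ^ 2 - 1 : R[X]).Monic := by
  simpa using monic_X_pow_sub_C (1 : R) two_ne_zero

lemma natDegree_X_sq_sub_one_pow [Nontrivial R] (n : ℕ) :
    ((X ^ 2 - 1 : R[X]) ^ n).natDegree = 2 * n := by
  rw [monic_X_sq_sub_one.natDegree_pow, ← map_one C, natDegree_X_pow_sub_C, mul_comm]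

lemma iterate_derivative_X_sq_sub_one_pow_self [Nontrivial R] (n : ℕ) :
    derivative^[2 * n] ((X ^ 2 - 1 : R[X]) ^ n) = C ((2 * n).factorial : R) := by
  have hdeg := natDegree_X_sq_sub_one_pow (R := R) n
  have hlead : ((X ^ 2 - 1 : R[X]) ^ n).coeff (2 * n) = 1 := by
    rw [← hdeg, ← leadingCoeff]
    exact monic_X_sq_sub_one.pow n
  rw [eq_C_of_natDegree_le_zero ((natDegree_iterate_derivative _ _).trans (by omega)),
    coeff_iterate_derivative, zero_add, hlead, Nat.descFactorial_self]
  simp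

end Rodrigues

lemma intervalIntegrable_eval_mul_eval (q r : ℝ[X]) (a b : ℝ) :
    IntervalIntegrable (fun x => q.eval x * r.eval x) volume a b :=
  (q.continuous.mul r.continuous).intervalIntegrable a b

noncomputable def polyInner : ℝ[X] →ₗ[ℝ] ℝ[X] →ₗ[ℝ] ℝ :=
  LinearMap.mk₂ ℝ (fun q r => ∫ x in (-1)..1, q.eval x * r.eval x)
    (fun q₁ q₂ r => by
      simp only [eval_add, add_mul]
      exact intervalIntegral.integral_add (intervalIntegrable_eval_mul_eval _ _ _ _)
        (intervalIntegrable_eval_mul_eval _ _ _ _))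
    (fun c q r => by
      simp only [eval_smul, smul_eq_mul, mul_assoc, intervalIntegral.integral_const_mul])
    (fun q r₁ r₂ => by
      simp only [eval_add, mul_add]
      exact intervalIntegral.integral_add (intervalIntegrable_eval_mul_eval _ _ _ _)
        (intervalIntegrable_eval_mul_eval _ _ _ _))
    (fun c q r => by
      simp only [eval_smul, smul_eq_mul, mul_left_comm, intervalIntegral.integral_const_mul])

lemma polyInner_apply (q r : ℝ[X]) :
    polyInner q r = ∫ x in (-1)..1, q.eval x * r.eval x := rfl

lemma polyInner_comm (q r : ℝ[X]) : polyInner q r = polyInner r q := by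
  simp only [polyInner_apply, mul_comm]

lemma polyInner_derivative_left (q r : ℝ[X]) :
    polyInner (derivative q) r =
      q.eval 1 * r.eval 1 - q.eval (-1) * r.eval (-1) - polyInner q (derivative r) := by
  rw [eq_sub_iff_add_eq, polyInner_apply, polyInner_apply,
    ← intervalIntegral.integral_add (intervalIntegrable_eval_mul_eval _ _ _ _)
      (intervalIntegrable_eval_mul_eval _ _ _ _)]
  exact intervalIntegral.integral_deriv_mul_eq_sub (fun x _ => q.hasDerivAt x)
    (fun x _ => r.hasDerivAt x) (q.derivative.continuous.intervalIntegrable _ _)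
    (r.derivative.continuous.intervalIntegrable _ _)

noncomputable def rodrigues (n : ℕ) : ℝ[X] := derivative^[n] ((X ^ 2 - 1) ^ n)

lemma polyInner_rodrigues_left (n : ℕ) (r : ℝ[X]) {k : ℕ} (hk : k ≤ n) :
    polyInner (rodrigues n) r =
      (-1) ^ k * polyInner (derivative^[n - k] ((X ^ 2 - 1) ^ n)) (derivative^[k] r) := by
  induction k with
  | zero => simp [rodrigues]
  | succ k ih =>
    have hvanish : ∀ c : ℝ, c = 1 ∨ c = -1 →
        (derivative^[n - (k + 1)] ((X ^ 2 - 1 : ℝ[X]) ^ n)).eval c = 0 :=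
      fun c hc => eval_iterate_derivative_X_sq_sub_one_pow_of_lt (by omega) hc
    rw [ih (by omega), show n - k = n - (k + 1) + 1 by omega, Function.iterate_succ_apply',
      polyInner_derivative_left, hvanish 1 (.inl rfl), hvanish (-1) (.inr rfl),
      ← Function.iterate_succ_apply' derivative k]
    ring

lemma polyInner_rodrigues_eq_zero_of_natDegree_lt {n : ℕ} {r : ℝ[X]} (hr : r.natDegree < n) :
    polyInner (rodrigues n) r = 0 := by
  rw [polyInner_rodrigues_left n r le_rfl, iterate_derivative_eq_zero hr, map_zero, mul_zero]

lemma integral_one_sub_sq_pow_succ (n : ℕ) :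
    (2 * n + 3 : ℝ) * ∫ x in (-1)..1, (1 - x ^ 2) ^ (n + 1) =
      (2 * n + 2) * ∫ x in (-1)..1, (1 - x ^ 2) ^ n := by
  have hderiv : ∀ x ∈ uIcc (-1 : ℝ) 1, HasDerivAt (fun x : ℝ => x * (1 - x ^ 2) ^ (n + 1))
      ((2 * n + 3) * (1 - x ^ 2) ^ (n + 1) - (2 * n + 2) * (1 - x ^ 2) ^ n) x := by
    intro x _
    refine ((hasDerivAt_id' x).mul
      (((hasDerivAt_pow 2 x).const_sub 1).pow (n + 1))).congr_deriv ?_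
    simp only [Nat.add_sub_cancel, Pi.pow_apply]
    push_cast
    ring
  have hftc := intervalIntegral.integral_eq_sub_of_hasDerivAt hderiv
    (Continuous.intervalIntegrable (by fun_prop) _ _)
  rw [intervalIntegral.integral_sub (Continuous.intervalIntegrable (by fun_prop) _ _)
      (Continuous.intervalIntegrable (by fun_prop) _ _),
    intervalIntegral.integral_const_mul, intervalIntegral.integral_const_mul] at hftc
  norm_num at hftc
  linarith

lemma integral_one_sub_sq_pow (n : ℕ) :
    ∫ x in (-1)..1, (1 - x ^ 2) ^ n =
      2 * (2 ^ n * (n.factorial : ℝ)) ^ 2 / ((2 * n + 1).factorial : ℝ) := by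
  induction n with
  | zero => norm_num
  | succ n ih =>
    have hrec := integral_one_sub_sq_pow_succ n
    rw [ih] at hrec
    rw [eq_div_iff (by positivity), show 2 * (n + 1) + 1 = 2 * n + 1 + 1 + 1 by ring,
      Nat.factorial_succ, Nat.factorial_succ]
    push_cast [Nat.factorial_succ] at hrec ⊢
    field_simp at hrec
    linear_combination (2 * (n:ℝ) + 2) * hrec

lemma polyInner_rodrigues_self (n : ℕ) :
    polyInner (rodrigues n) (rodrigues n) =
      (2 * n).factorial * ∫ x in (-1)..1, (1 - x ^ 2) ^ n := by
  rw [polyInner_rodrigues_left n _ le_rfl, Nat.sub_self, rodrigues,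
    ← Function.iterate_add_apply, ← two_mul, iterate_derivative_X_sq_sub_one_pow_self,
    polyInner_apply, ← intervalIntegral.integral_const_mul,
    ← intervalIntegral.integral_const_mul]
  refine intervalIntegral.integral_congr fun x _ => ?_
  simp only [Function.iterate_zero_apply, eval_pow, eval_sub, eval_one, eval_C, eval_X]
  rw [← mul_assoc, ← mul_pow]
  ring

lemma leg_eq_smul_rodrigues (n : ℕ) :
    leg n = (1 / (2 ^ n * n.factorial : ℝ)) • rodrigues n := rfl

lemma natDegree_leg_le (n : ℕ) : (leg n).natDegree ≤ n :=
  (natDegree_smul_le _ _).trans <| (natDegree_iterate_derivative _ _).trans <| by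
    rw [natDegree_X_sq_sub_one_pow]
    omega

lemma polyInner_leg_eq_zero_of_natDegree_lt {n : ℕ} {r : ℝ[X]} (hr : r.natDegree < n) :
    polyInner (leg n) r = 0 := by
  rw [leg_eq_smul_rodrigues, map_smul, LinearMap.smul_apply,
    polyInner_rodrigues_eq_zero_of_natDegree_lt hr, smul_zero]

lemma polyInner_leg_self (n : ℕ) : polyInner (leg n) (leg n) = 2 / (2 * n + 1) := by
  simp only [leg_eq_smul_rodrigues, map_smul, LinearMap.smul_apply, smul_eq_mul]
  rw [polyInner_rodrigues_self, integral_one_sub_sq_pow, Nat.factorial_succ]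
  push_cast
  field_simp

lemma eval_one_leg (n : ℕ) : (leg n).eval 1 = 1 := by
  rw [leg_eq_smul_rodrigues, eval_smul, rodrigues, X_sq_sub_one_eq_mul, mul_pow,
    eval_iterate_derivative_pow_mul_pow_self]
  norm_num
  field_simp

lemma eval_neg_one_leg (n : ℕ) : (leg n).eval (-1) = (-1) ^ n := by
  rw [leg_eq_smul_rodrigues, eval_smul, rodrigues, X_sq_sub_one_eq_mul, mul_comm (X - C 1),
    mul_pow, eval_iterate_derivative_pow_mul_pow_self, show (-1 : ℝ) - 1 = -1 * 2 by norm_num,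
    mul_pow, smul_eq_mul]
  field_simp

/-- For `σ = 1` this is the polynomial `q_{p,0} = (L_p + L_{p+1}) / 2`, for `σ = -1` its mirror
image `q_{p,0}(-x)`. -/
noncomputable def endpointPoly (p : ℕ) (σ : ℝ) : ℝ[X] :=
  (σ ^ p / 2) • (leg p + σ • leg (p + 1))

lemma natDegree_endpointPoly_le (p : ℕ) (σ : ℝ) : (endpointPoly p σ).natDegree ≤ p + 1 :=
  (natDegree_smul_le _ _).trans <| (natDegree_add_le _ _).trans <|
    max_le ((natDegree_leg_le p).trans p.le_succ)
      ((natDegree_smul_le _ _).trans (natDegree_leg_le _))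

lemma polyInner_endpointPoly_eq_zero_of_natDegree_lt (p : ℕ) (σ : ℝ) {r : ℝ[X]}
    (hr : r.natDegree < p) : polyInner r (endpointPoly p σ) = 0 := by
  rw [polyInner_comm]
  simp only [endpointPoly, map_smul, map_add, LinearMap.smul_apply, LinearMap.add_apply,
    polyInner_leg_eq_zero_of_natDegree_lt hr,
    polyInner_leg_eq_zero_of_natDegree_lt (hr.trans p.lt_succ_self), smul_zero, add_zero]

lemma polyInner_endpointPoly_self (p : ℕ) {σ : ℝ} (hσ : σ ^ 2 = 1) :
    polyInner (endpointPoly p σ) (endpointPoly p σ) =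
      2 * (p + 1) / ((2 * p + 1) * (2 * p + 3)) := by
  have hcross : polyInner (leg p) (leg (p + 1)) = 0 := by
    rw [polyInner_comm]
    exact polyInner_leg_eq_zero_of_natDegree_lt ((natDegree_leg_le p).trans_lt p.lt_succ_self)
  have hσp : (σ ^ p) ^ 2 = 1 := by rw [← pow_mul, mul_comm, pow_mul, hσ, one_pow]
  simp only [endpointPoly, map_smul, map_add, LinearMap.smul_apply, LinearMap.add_apply,
    smul_eq_mul, polyInner_comm (leg (p + 1)) (leg p), hcross, polyInner_leg_self]
  calc _ = (σ ^ p) ^ 2 / 4 * (2 / (2 * p + 1) + σ ^ 2 * (2 / (2 * p + 3))) := by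
        push_cast
        ring
    _ = _ := by
        rw [hσp, hσ]
        field_simp
        ring

lemma mul_eval_one_sub_mul_eval_neg_one_endpointPoly {σ : ℝ} (hσ : σ = 1 ∨ σ = -1) (p : ℕ)
    (e : ℝ → ℝ) :
    e 1 * (endpointPoly p σ).eval 1 - e (-1) * (endpointPoly p σ).eval (-1) = σ * e σ := by
  have hsq : ((-1 : ℝ) ^ p) ^ 2 = 1 := by rw [← pow_mul, mul_comm, pow_mul]; norm_num
  rcases hσ with rfl | rfl <;>
    simp only [endpointPoly, eval_smul, eval_add, smul_eq_mul, eval_one_leg, eval_neg_one_leg]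
  · ring
  · linear_combination -e (-1) * hsq

lemma sq_integral_mul_le_integral_sq_mul_integral_sq {α : Type*} [MeasurableSpace α]
    {μ : Measure α} {f g : α → ℝ} (hf : Integrable (fun x => f x ^ 2) μ)
    (hg : Integrable (fun x => g x ^ 2) μ) (hfg : Integrable (fun x => f x * g x) μ) :
    (∫ x, f x * g x ∂μ) ^ 2 ≤ (∫ x, f x ^ 2 ∂μ) * ∫ x, g x ^ 2 ∂μ := by
  have hquadratic : ∀ t : ℝ,
      0 ≤ (∫ x, f x ^ 2 ∂μ) * (t * t) + 2 * (∫ x, f x * g x ∂μ) * t + ∫ x, g x ^ 2 ∂μ := by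
    intro t
    have hexpand : ∫ x, (t * f x + g x) ^ 2 ∂μ =
        (∫ x, f x ^ 2 ∂μ) * (t * t) + 2 * (∫ x, f x * g x ∂μ) * t + ∫ x, g x ^ 2 ∂μ := by
      have hpointwise : (fun x => (t * f x + g x) ^ 2) =
          fun x => t * t * f x ^ 2 + 2 * t * (f x * g x) + g x ^ 2 := by
        ext x
        ring
      have hfirst : Integrable (fun x => t * t * f x ^ 2 + 2 * t * (f x * g x)) μ :=
        (hf.const_mul _).add (hfg.const_mul _)
      rw [hpointwise, integral_add hfirst hg,
        integral_add (hf.const_mul _) (hfg.const_mul _), integral_const_mul, integral_const_mul]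
      ring
    exact hexpand ▸ integral_nonneg fun x => sq_nonneg _
  have := discrim_le_zero hquadratic
  rw [discrim] at this
  nlinarith

lemma setIntegral_Iom (f : ℝ → ℝ) : ∫ x in Iom, f x = ∫ x in (-1)..1, f x := by
  rw [intervalIntegral.integral_of_le (by norm_num), Iom, integral_Icc_eq_integral_Ioc]

lemma trace_eq_integral_derivWithin_mul {p : ℕ} {u P : ℝ → ℝ} (hu : MemH 1 u)
    (hP : IsL2Proj p u P) {q : ℝ[X]} (hdeg : q.natDegree ≤ p + 1)
    (horth : ∀ r : ℝ[X], r.natDegree < p → polyInner r q = 0) :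
    (u 1 - P 1) * q.eval 1 - (u (-1) - P (-1)) * q.eval (-1) =
      ∫ x in Iom, derivWithin u Iom x * q.eval x := by
  obtain ⟨⟨qP, hqPdeg, hqP⟩, hproj⟩ := hP
  obtain rfl : P = fun x => qP.eval x := funext hqP
  have hIom : uIcc (-1 : ℝ) 1 = Iom := uIcc_of_le (by norm_num)
  have hu' : ContinuousOn (derivWithin u Iom) Iom :=
    hu.continuousOn_derivWithin (uniqueDiffOn_Icc (by norm_num)) le_rfl
  have hint_u' : IntervalIntegrable (fun x => derivWithin u Iom x * q.eval x) volume (-1) 1 :=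
    (hu'.mul q.continuous.continuousOn).intervalIntegrable_of_Icc (by norm_num)
  have hint_u : IntervalIntegrable (fun x => u x * (derivative q).eval x) volume (-1) 1 :=
    (hu.continuousOn.mul q.derivative.continuous.continuousOn).intervalIntegrable_of_Icc
      (by norm_num)
  have hparts_u : (∫ x in (-1)..1, derivWithin u Iom x * q.eval x) +
      ∫ x in (-1)..1, u x * (derivative q).eval x = u 1 * q.eval 1 - u (-1) * q.eval (-1) := by
    rw [← intervalIntegral.integral_add hint_u' hint_u]
    refine intervalIntegral.integral_deriv_mul_eq_sub_of_hasDerivWithinAt (fun x hx => ?_)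
      (fun x _ => (q.hasDerivAt x).hasDerivWithinAt) (hu'.intervalIntegrable_of_Icc (by norm_num))
      (q.derivative.continuous.intervalIntegrable _ _)
    rw [hIom] at hx ⊢
    exact (hu.differentiableOn one_ne_zero x hx).hasDerivWithinAt
  have hparts_P := polyInner_derivative_left qP q
  have horth_P : polyInner (derivative qP) q = 0 := by
    rcases eq_or_ne (derivative qP) 0 with h | h
    · rw [h, map_zero, LinearMap.zero_apply]
    · exact horth _ ((natDegree_derivative_lt fun h0 =>
        h (derivative_of_natDegree_zero h0)).trans_le hqPdeg)
  have hproj' :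
      polyInner qP (derivative q) - ∫ x in (-1)..1, u x * (derivative q).eval x = 0 := by
    rw [polyInner_apply, ← intervalIntegral.integral_sub
      (intervalIntegrable_eval_mul_eval _ _ _ _) hint_u, ← setIntegral_Iom]
    simpa only [sub_mul] using hproj (derivative q) ((natDegree_derivative_le q).trans (by omega))
  rw [setIntegral_Iom]
  linear_combination -hparts_u + hparts_P - horth_P - hproj'

lemma trace_sq_le_polyInner_mul_semSq {p : ℕ} {u P : ℝ → ℝ} (hu : MemH 1 u)
    (hP : IsL2Proj p u P) {q : ℝ[X]} (hdeg : q.natDegree ≤ p + 1)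
    (horth : ∀ r : ℝ[X], r.natDegree < p → polyInner r q = 0) :
    ((u 1 - P 1) * q.eval 1 - (u (-1) - P (-1)) * q.eval (-1)) ^ 2 ≤
      polyInner q q * semSq 1 u := by
  have hu' : ContinuousOn (derivWithin u Iom) Iom :=
    hu.continuousOn_derivWithin (uniqueDiffOn_Icc (by norm_num)) le_rfl
  have hq := q.continuous.continuousOn (s := Iom)
  rw [trace_eq_integral_derivWithin_mul hu hP hdeg horth]
  calc _ ≤ (∫ x in Iom, derivWithin u Iom x ^ 2) * ∫ x in Iom, q.eval x ^ 2 :=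
        sq_integral_mul_le_integral_sq_mul_integral_sq (hu'.pow 2).integrableOn_Icc
          (hq.pow 2).integrableOn_Icc (hu'.mul hq).integrableOn_Icc
    _ = polyInner q q * semSq 1 u := by
        rw [semSq, nsq, iteratedDerivWithin_one, polyInner_apply, ← setIntegral_Iom, mul_comm]
        simp only [sq]

/-- For `u ∈ H¹(Ω)` and the `L²` projection `π_p u`, both traces satisfy
`|(u − π_p u)(±1)|² ≤ 2(p+1)/((2p+1)(2p+3)) · |u|₁²` and, in particular,
`|(u − π_p u)(±1)|² ≤ 1/(2p+1) · |u|₁²`. -/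
theorem trace_projection_error_H1 (p : ℕ) (u P : ℝ → ℝ)
    (hu : MemH 1 u) (hP : IsL2Proj p u P) :
    ∀ x ∈ ({1, -1} : Set ℝ),
      (u x - P x) ^ 2 ≤
          2 * ((p : ℝ) + 1) / ((2 * (p : ℝ) + 1) * (2 * (p : ℝ) + 3)) * semSq 1 u ∧
      (u x - P x) ^ 2 ≤ 1 / (2 * (p : ℝ) + 1) * semSq 1 u := by
  intro σ hσ
  have hσ' : σ = 1 ∨ σ = -1 := hσ
  have hsq : σ ^ 2 = 1 := by rcases hσ' with rfl | rfl <;> norm_num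
  have hbound := trace_sq_le_polyInner_mul_semSq hu hP (natDegree_endpointPoly_le p σ)
    fun r hr => polyInner_endpointPoly_eq_zero_of_natDegree_lt p σ hr
  rw [mul_eval_one_sub_mul_eval_neg_one_endpointPoly hσ' p (fun x => u x - P x), mul_pow, hsq,
    one_mul, polyInner_endpointPoly_self p hsq] at hbound
  refine ⟨hbound, hbound.trans (mul_le_mul_of_nonneg_right ?_ ?_)⟩
  · rw [div_le_div_iff₀ (by positivity) (by positivity)]
    nlinarith
  · exact setIntegral_nonneg measurableSet_Icc fun x _ => sq_nonneg _
end

section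
/- Let p ≥ 1 and let q_{p,1} be the polynomial q_{p,1} = −((p+2)(p+1)/(4(2p+1))) L_{p−1} + (1/2 + (p+1)p/(4(2p+3))) L_p + (1/2 − (p+2)(p+1)/(4(2p+1))) L_{p+1} − ((p+1)p/(4(2p+3))) L_{p+2}. Then ‖q_{p,1}‖₀² = p(p+1)(p+2)(p² + 2p + 10) / ((2p−1)(2p+1)(2p+3)(2p+5)). -/
open MeasureTheory Polynomial

noncomputable section
open intervalIntegral
/-- basic polynomial IBP on [-1,1] -/
lemma pibp (u v : Polynomial ℝ) :
    ∫ x in (-1:ℝ)..1, u.eval x * (derivative v).eval x =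
      u.eval 1 * v.eval 1 - u.eval (-1) * v.eval (-1)
        - ∫ x in (-1:ℝ)..1, (derivative u).eval x * v.eval x := by
  apply intervalIntegral.integral_mul_deriv_eq_deriv_mul_of_hasDerivAt
    (u := fun x => u.eval x) (v := fun x => v.eval x)
    (u' := fun x => (derivative u).eval x) (v' := fun x => (derivative v).eval x)
  · exact (Polynomial.continuous u).continuousOn
  · exact (Polynomial.continuous v).continuousOn
  · exact fun x _ => u.hasDerivAt x
  · exact fun x _ => v.hasDerivAt x
  · exact (Polynomial.continuous _).intervalIntegrable _ _
  · exact (Polynomial.continuous _).intervalIntegrable _ _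

lemma pint (q : Polynomial ℝ) : IntervalIntegrable (fun x => q.eval x) volume (-1:ℝ) 1 :=
  (Polynomial.continuous q).intervalIntegrable _ _

/-- factor lemma -/
lemma fact_dvd (n k : ℕ) (hk : k ≤ n) :
    ∃ r : Polynomial ℝ, derivative^[k] ((X ^ 2 - 1) ^ n) = (X ^ 2 - 1) ^ (n - k) * r := by
  induction k with
  | zero => exact ⟨1, by simp⟩
  | succ k ih =>
    obtain ⟨r, hr⟩ := ih (le_of_lt hk)
    refine ⟨C ((n - k : ℕ) : ℝ) * (C 2 * X) * r + (X ^ 2 - 1) * derivative r, ?_⟩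
    have hnk : n - k = (n - (k+1)) + 1 := by omega
    rw [Function.iterate_succ_apply', hr, derivative_mul, derivative_pow, hnk]
    have hd : derivative ((X:Polynomial ℝ) ^ 2 - 1) = C 2 * X := by
      rw [derivative_sub, derivative_one, derivative_X_pow]
      norm_num
    rw [hd]
    push_cast [hnk]
    ring

lemma eval_vanish (n k : ℕ) (hk : k < n) (x : ℝ) (hx : x ^ 2 = 1) :
    (derivative^[k] (((X:Polynomial ℝ) ^ 2 - 1) ^ n)).eval x = 0 := by
  obtain ⟨r, hr⟩ := fact_dvd n k (le_of_lt hk)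
  have h1 : n - k = (n - k - 1) + 1 := by omega
  rw [hr, h1]
  simp only [eval_mul, eval_pow, eval_sub, eval_one, eval_X]
  rw [hx]
  simp

/-- iterated IBP -/
lemma ibp_iter (n : ℕ) (v : Polynomial ℝ) : ∀ j ≤ n,
    (∫ x in (-1:ℝ)..1, (derivative^[n] (((X:Polynomial ℝ)^2 - 1) ^ n)).eval x * v.eval x)
      = (-1:ℝ)^j * ∫ x in (-1:ℝ)..1,
          (derivative^[n - j] (((X:Polynomial ℝ)^2 - 1) ^ n)).eval x *
            (derivative^[j] v).eval x := by
  intro j hj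
  induction j with
  | zero => simp
  | succ j ih =>
    rw [ih (by omega)]
    have h1 : n - j = (n - (j+1)) + 1 := by omega
    have key : (∫ x in (-1:ℝ)..1,
        (derivative^[n - j] (((X:Polynomial ℝ)^2 - 1) ^ n)).eval x *
          (derivative^[j] v).eval x)
        = - ∫ x in (-1:ℝ)..1,
            (derivative^[n - (j+1)] (((X:Polynomial ℝ)^2 - 1) ^ n)).eval x *
              (derivative^[j+1] v).eval x := by
      rw [h1, Function.iterate_succ_apply']
      rw [show ∀ f g : ℝ → ℝ, (∫ x in (-1:ℝ)..1, f x * g x) = ∫ x in (-1:ℝ)..1, g x * f x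
        from fun f g => by simp_rw [mul_comm]]
      rw [pibp]
      rw [eval_vanish n (n - (j+1)) (by omega) 1 (by norm_num),
        eval_vanish n (n - (j+1)) (by omega) (-1) (by norm_num)]
      rw [Function.iterate_succ_apply']
      simp_rw [mul_comm]
      ring_nf
    rw [key]
    rw [show ((j:ℕ)+1) = j + 1 from rfl]
    rw [pow_succ]
    ring
end

noncomputable section
open Polynomial
def J (q : Polynomial ℝ) : ℝ := ∫ x in (-1:ℝ)..1, q.eval x

lemma J_add (p q : Polynomial ℝ) : J (p + q) = J p + J q := by
  unfold J
  simp_rw [Polynomial.eval_add]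
  exact intervalIntegral.integral_add (pint p) (pint q)

lemma J_C_mul (c : ℝ) (p : Polynomial ℝ) : J (C c * p) = c * J p := by
  unfold J
  simp_rw [Polynomial.eval_mul, Polynomial.eval_C]
  exact intervalIntegral.integral_const_mul c _

lemma J_zero : J 0 = 0 := by unfold J; simp

lemma J_C (c : ℝ) : J (C c) = 2 * c := by
  unfold J
  simp only [Polynomial.eval_C, intervalIntegral.integral_const]
  norm_num

/-- IBP at J level -/
lemma Jibp (u v : Polynomial ℝ) :
    J (u * derivative v) = u.eval 1 * v.eval 1 - u.eval (-1) * v.eval (-1)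
      - J (derivative u * v) := by
  unfold J
  simp_rw [Polynomial.eval_mul]
  exact pibp u v

lemma ibp_iterJ (n : ℕ) (v : Polynomial ℝ) (j : ℕ) (hj : j ≤ n) :
    J (derivative^[n] (((X:Polynomial ℝ)^2 - 1) ^ n) * v)
      = (-1:ℝ)^j * J (derivative^[n - j] (((X:Polynomial ℝ)^2 - 1) ^ n) * derivative^[j] v) := by
  unfold J
  simp_rw [Polynomial.eval_mul]
  exact ibp_iter n v j hj

lemma leg_natDegree (m : ℕ) : (leg m).natDegree ≤ m := by
  unfold leg
  refine le_trans (natDegree_smul_le _ _) ?_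
  refine le_trans (natDegree_iterate_derivative _ _) ?_
  have h1 : (((X:Polynomial ℝ)^2 - 1) ^ m).natDegree ≤ 2 * m := by
    refine le_trans (natDegree_pow_le) ?_
    have : ((X:Polynomial ℝ)^2 - 1).natDegree ≤ 2 := by
      compute_degree
    calc m * ((X:Polynomial ℝ)^2 - 1).natDegree ≤ m * 2 := Nat.mul_le_mul_left m this
      _ = 2 * m := by ring
  omega

lemma ortho (m n : ℕ) (h : m < n) : J (leg n * leg m) = 0 := by
  have hc : leg n = C ((1:ℝ) / (2 ^ n * n.factorial)) * derivative^[n] (((X:Polynomial ℝ)^2 - 1) ^ n) := by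
    rw [leg, smul_eq_C_mul]
  rw [hc, mul_assoc, J_C_mul, ibp_iterJ n (leg m) n le_rfl]
  rw [Polynomial.iterate_derivative_eq_zero (lt_of_le_of_lt (leg_natDegree m) h)]
  simp [J_zero]

lemma P_monic (n : ℕ) : (((X:Polynomial ℝ)^2 - 1) ^ n).Monic := by
  have h : ((X:Polynomial ℝ)^2 - 1) = X^2 - C 1 := by rw [C_1]
  rw [h]
  exact (monic_X_pow_sub_C (1:ℝ) (two_ne_zero)).pow n

lemma P_natDegree (n : ℕ) : (((X:Polynomial ℝ)^2 - 1) ^ n).natDegree = 2 * n := by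
  have h2 : ((X:Polynomial ℝ)^2 - 1).natDegree = 2 := by
    have h : ((X:Polynomial ℝ)^2 - 1) = X^2 - C 1 := by rw [C_1]
    rw [h, natDegree_X_pow_sub_C]
  rw [Monic.natDegree_pow (by
    have : ((X:Polynomial ℝ)^2 - 1) = X^2 - C 1 := by norm_num
    rw [this]; exact monic_X_pow_sub_C 1 (by norm_num)), h2]
  ring

lemma D2n (n : ℕ) :
    derivative^[2 * n] (((X:Polynomial ℝ)^2 - 1) ^ n) = C (((2 * n).factorial : ℝ)) := by
  have h1 : derivative^[2 * n] ((X:Polynomial ℝ) ^ (2 * n)) = C (((2 * n).factorial : ℝ)) := by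
    rw [Polynomial.iterate_derivative_X_pow_eq_C_mul]
    simp [Nat.descFactorial_self]
  have h2 : derivative^[2 * n] ((((X:Polynomial ℝ)^2 - 1) ^ n) - X ^ (2 * n)) = 0 := by
    rcases Nat.eq_zero_or_pos n with rfl | hn
    · simp
    refine Polynomial.iterate_derivative_eq_zero ?_
    have hPdeg : (((X:Polynomial ℝ)^2 - 1) ^ n).degree = ((2 * n : ℕ) : WithBot ℕ) := by
      rw [degree_eq_natDegree (P_monic n).ne_zero, P_natDegree]
    have hdeg : ((((X:Polynomial ℝ)^2 - 1) ^ n) - X ^ (2 * n)).degree < ((2 * n : ℕ) : WithBot ℕ) := by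
      have := Polynomial.degree_sub_lt
        (p := (((X:Polynomial ℝ)^2 - 1) ^ n)) (q := X ^ (2 * n))
        (by rw [hPdeg, degree_X_pow]) (P_monic n).ne_zero
        (by rw [(P_monic n).leadingCoeff, leadingCoeff_X_pow])
      rwa [hPdeg] at this
    rcases eq_or_ne ((((X:Polynomial ℝ)^2 - 1) ^ n) - X ^ (2 * n)) 0 with h0 | h0
    · rw [h0]; simp only [natDegree_zero]; omega
    · exact (natDegree_lt_iff_degree_lt h0).mpr hdeg
  rw [Polynomial.iterate_derivative_sub, sub_eq_zero, h1] at h2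
  exact h2
end

noncomputable section
open Polynomial

lemma J_sub (p q : Polynomial ℝ) : J (p - q) = J p - J q := by
  unfold J
  simp_rw [Polynomial.eval_sub]
  exact intervalIntegral.integral_sub (pint p) (pint q)

lemma I_val (n : ℕ) : J (((X:Polynomial ℝ)^2 - 1)^n)
    = (-1:ℝ)^n * 2^(2*n+1) * (n.factorial * n.factorial) / (2*n+1).factorial := by
  induction n with
  | zero =>
    rw [pow_zero, show (1 : Polynomial ℝ) = C 1 from (C_1).symm, J_C]
    norm_num
  | succ n ih =>
    have hd : derivative ((X:Polynomial ℝ) ^ 2 - 1) = C 2 * X := by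
      rw [derivative_sub, derivative_one, derivative_X_pow]
      norm_num
    have hder : derivative (((X:Polynomial ℝ)^2 - 1)^(n+1)) * X
        = C ((2*(n+1):ℝ)) * ((((X:Polynomial ℝ)^2 - 1)^n) * X^2) := by
      rw [derivative_pow, hd]
      rw [show C ((2*(n+1):ℝ)) = C (2:ℝ) * C (((n+1):ℕ):ℝ) by rw [← C_mul]; push_cast; ring]
      push_cast
      ring
    have hbound : ∀ x : ℝ, x^2 = 1 → (((X:Polynomial ℝ)^2 - 1)^(n+1)).eval x = 0 := by
      intro x hx
      simp only [eval_pow, eval_sub, eval_one, eval_X]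
      rw [hx]
      simp
    have key1 : J (((X:Polynomial ℝ)^2 - 1)^(n+1))
        = -(2*((n:ℝ)+1)) * J ((((X:Polynomial ℝ)^2 - 1)^n) * X^2) := by
      have h0 : (((X:Polynomial ℝ)^2 - 1)^(n+1))
          = (((X:Polynomial ℝ)^2 - 1)^(n+1)) * derivative X := by
        rw [derivative_X, mul_one]
      rw [h0, Jibp, hbound 1 (by norm_num), hbound (-1) (by norm_num), hder, J_C_mul]
      ring
    have key2 : J (((X:Polynomial ℝ)^2 - 1)^(n+1))
        = J ((((X:Polynomial ℝ)^2 - 1)^n) * X^2) - J (((X:Polynomial ℝ)^2 - 1)^n) := by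
      rw [← J_sub]
      congr 1
      ring
    set A := J (((X:Polynomial ℝ)^2 - 1)^(n+1)) with hA
    set B := J ((((X:Polynomial ℝ)^2 - 1)^n) * X^2) with hB
    have hsol : A = -(2*(n:ℝ)+2)/(2*(n:ℝ)+3) * J (((X:Polynomial ℝ)^2 - 1)^n) := by
      have h1 : B = A + J (((X:Polynomial ℝ)^2 - 1)^n) := by linarith [key2]
      rw [h1] at key1
      have h3 : (2*(n:ℝ)+3) ≠ 0 := by positivity
      field_simp
      linarith [key1]
    rw [hsol, ih]
    have hf1 : ((2*(n+1)+1).factorial : ℝ) = (2*(n:ℝ)+3) * ((2*(n:ℝ)+2) * (2*n+1).factorial) := by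
      rw [show 2*(n+1)+1 = (2*n+1) + 1 + 1 by ring, Nat.factorial_succ, Nat.factorial_succ]
      push_cast
      ring
    have hf2 : ((n+1).factorial : ℝ) = ((n:ℝ)+1) * n.factorial := by
      rw [Nat.factorial_succ]; push_cast; ring
    rw [hf1, hf2]
    have h4 : ((2*n+1).factorial : ℝ) ≠ 0 := by positivity
    have h5 : (2*(n:ℝ)+3) ≠ 0 := by positivity
    have h6 : (2*(n:ℝ)+2) ≠ 0 := by positivity
    field_simp
    ring

lemma legNorm (n : ℕ) : J (leg n * leg n) = 2 / (2*(n:ℝ)+1) := by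
  have hc : leg n = C ((1:ℝ) / (2 ^ n * n.factorial))
      * derivative^[n] (((X:Polynomial ℝ)^2 - 1) ^ n) := by
    rw [leg, smul_eq_C_mul]
  set D := derivative^[n] (((X:Polynomial ℝ)^2 - 1) ^ n) with hD
  have hsq : leg n * leg n = C ((1:ℝ) / (2 ^ n * n.factorial))
      * (C ((1:ℝ) / (2 ^ n * n.factorial)) * (D * D)) := by
    rw [hc]; ring
  rw [hsq, J_C_mul, J_C_mul]
  have hDD : J (D * D) = (-1:ℝ)^n * (((2*n).factorial : ℝ) * J (((X:Polynomial ℝ)^2 - 1)^n)) := by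
    rw [hD, ibp_iterJ n D n le_rfl]
    have : derivative^[n] D = C (((2 * n).factorial : ℝ)) := by
      rw [hD, ← Function.iterate_add_apply, show n + n = 2 * n by ring, D2n]
    rw [this, Nat.sub_self, Function.iterate_zero_apply, mul_comm _ (C _), J_C_mul]
  rw [hDD, I_val]
  have hf : ((2*n+1).factorial : ℝ) = (2*(n:ℝ)+1) * (2*n).factorial := by
    rw [Nat.factorial_succ]; push_cast; ring
  rw [hf]
  have h1 : ((n.factorial : ℝ)) ≠ 0 := by positivity
  have h2 : ((2:ℝ) ^ n) ≠ 0 := by positivity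
  have h3 : (2*(n:ℝ)+1) ≠ 0 := by positivity
  have h4 : (((2*n).factorial : ℝ)) ≠ 0 := by positivity
  field_simp
  ring_nf
  rw [show ((-1:ℝ))^(n*2) = 1 by rw [mul_comm, pow_mul]; norm_num]
  ring
end

noncomputable section
open Polynomial

lemma ortho' (m n : ℕ) (h : m ≠ n) : J (leg m * leg n) = 0 := by
  rcases lt_or_gt_of_ne h with h' | h'
  · rw [mul_comm]; exact ortho m n h'
  · exact ortho n m h'

lemma keyJ (i : ℕ) (A B Cc Dd : ℝ) :
    J ((C A * leg i + C B * leg (i+1) + C Cc * leg (i+2) - C Dd * leg (i+3))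
        * (C A * leg i + C B * leg (i+1) + C Cc * leg (i+2) - C Dd * leg (i+3)))
      = A^2 * (2/(2*(i:ℝ)+1)) + B^2 * (2/(2*(i:ℝ)+3)) + Cc^2 * (2/(2*(i:ℝ)+5))
        + Dd^2 * (2/(2*(i:ℝ)+7)) := by
  have hexp : (C A * leg i + C B * leg (i+1) + C Cc * leg (i+2) - C Dd * leg (i+3))
        * (C A * leg i + C B * leg (i+1) + C Cc * leg (i+2) - C Dd * leg (i+3))
      = C (A*A) * (leg i * leg i) + C (B*B) * (leg (i+1) * leg (i+1))
        + C (Cc*Cc) * (leg (i+2) * leg (i+2)) + C (Dd*Dd) * (leg (i+3) * leg (i+3))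
        + C (2*A*B) * (leg i * leg (i+1)) + C (2*A*Cc) * (leg i * leg (i+2))
        + C (-(2*A*Dd)) * (leg i * leg (i+3)) + C (2*B*Cc) * (leg (i+1) * leg (i+2))
        + C (-(2*B*Dd)) * (leg (i+1) * leg (i+3)) + C (-(2*Cc*Dd)) * (leg (i+2) * leg (i+3)) := by
    simp only [C_mul, C_neg, map_ofNat]
    ring
  rw [hexp]
  rw [J_add, J_add, J_add, J_add, J_add, J_add, J_add, J_add, J_add]
  simp only [J_C_mul]
  rw [ortho' i (i+1) (by omega), ortho' i (i+2) (by omega), ortho' i (i+3) (by omega),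
    ortho' (i+1) (i+2) (by omega), ortho' (i+1) (i+3) (by omega),
    ortho' (i+2) (i+3) (by omega)]
  rw [legNorm i, legNorm (i+1), legNorm (i+2), legNorm (i+3)]
  push_cast
  ring
end

noncomputable section
lemma nsq_eq_J (q : Polynomial ℝ) (f : ℝ → ℝ) (hf : ∀ x, f x = q.eval x) :
    nsq f = J (q * q) := by
  have hfun : (fun x => f x ^ 2) = fun x => (q * q).eval x :=
    funext fun x => by rw [hf, Polynomial.eval_mul]; ring
  unfold nsq Iom J
  rw [hfun, MeasureTheory.integral_Icc_eq_integral_Ioc,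
    ← intervalIntegral.integral_of_le (by norm_num : (-1:ℝ) ≤ 1)]
end

/-- For `p ≥ 1`, the polynomial
`q_{p,1} = −((p+2)(p+1)/(4(2p+1))) L_{p−1} + (1/2 + (p+1)p/(4(2p+3))) L_p
+ (1/2 − (p+2)(p+1)/(4(2p+1))) L_{p+1} − ((p+1)p/(4(2p+3))) L_{p+2}` satisfies
`‖q_{p,1}‖₀² = p(p+1)(p+2)(p²+2p+10)/((2p−1)(2p+1)(2p+3)(2p+5))`. -/
theorem q_one_norm_sq (p : ℕ) (hp : 1 ≤ p) :
    nsq (fun x =>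
        -(((p : ℝ) + 2) * ((p : ℝ) + 1) / (4 * (2 * (p : ℝ) + 1))) * (leg (p - 1)).eval x
          + (1 / 2 + ((p : ℝ) + 1) * (p : ℝ) / (4 * (2 * (p : ℝ) + 3))) * (leg p).eval x
          + (1 / 2 - ((p : ℝ) + 2) * ((p : ℝ) + 1) / (4 * (2 * (p : ℝ) + 1))) *
              (leg (p + 1)).eval x
          - ((p : ℝ) + 1) * (p : ℝ) / (4 * (2 * (p : ℝ) + 3)) * (leg (p + 2)).eval x) =
      (p : ℝ) * ((p : ℝ) + 1) * ((p : ℝ) + 2) * ((p : ℝ) ^ 2 + 2 * (p : ℝ) + 10) /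
        ((2 * (p : ℝ) - 1) * (2 * (p : ℝ) + 1) * (2 * (p : ℝ) + 3) * (2 * (p : ℝ) + 5)) := by
  obtain ⟨i, rfl⟩ : ∃ i, p = i + 1 := ⟨p - 1, by omega⟩
  simp only [Nat.add_sub_cancel, show i+1+1 = i+2 from rfl, show i+1+2 = i+3 from rfl]
  rw [nsq_eq_J (C (-((((i+1:ℕ):ℝ) + 2) * (((i+1:ℕ):ℝ) + 1) / (4 * (2 * ((i+1:ℕ):ℝ) + 1)))) * leg i
      + C (1 / 2 + (((i+1:ℕ):ℝ) + 1) * ((i+1:ℕ):ℝ) / (4 * (2 * ((i+1:ℕ):ℝ) + 3))) * leg (i+1)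
      + C (1 / 2 - (((i+1:ℕ):ℝ) + 2) * (((i+1:ℕ):ℝ) + 1) / (4 * (2 * ((i+1:ℕ):ℝ) + 1))) * leg (i+2)
      - C ((((i+1:ℕ):ℝ) + 1) * ((i+1:ℕ):ℝ) / (4 * (2 * ((i+1:ℕ):ℝ) + 3))) * leg (i+3))]
  · rw [keyJ]
    have h1 : (2*(i:ℝ)+1) ≠ 0 := by positivity
    have h2 : (2*(i:ℝ)+3) ≠ 0 := by positivity
    have h3 : (2*(i:ℝ)+5) ≠ 0 := by positivity
    have h4 : (2*(i:ℝ)+7) ≠ 0 := by positivity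
    have hi : (0:ℝ) ≤ i := i.cast_nonneg
    have d1 : (0:ℝ) < 2*((i:ℝ)+1)-1 := by linarith
    have d2 : (0:ℝ) < 2*((i:ℝ)+1)+1 := by linarith
    have d3 : (0:ℝ) < 2*((i:ℝ)+1)+3 := by linarith
    have d4 : (0:ℝ) < 2*((i:ℝ)+1)+5 := by linarith
    have h6 : (4*(2*((i:ℝ)+1)+1)) ≠ 0 := by positivity
    have h7 : (4*(2*((i:ℝ)+1)+3)) ≠ 0 := by positivity
    push_cast
    rw [eq_div_iff (ne_of_gt (mul_pos (mul_pos (mul_pos d1 d2) d3) d4))]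
    field_simp
    ring
  · intro x
    simp only [eval_add, eval_sub, eval_mul, eval_C]
end

section
/- Let i, n ∈ ℕ₀ with i ≥ n, and let ψ_{i,n} be the n-th primitive of the Legendre polynomial L_i. Then ψ_{i,n}^{(ν)}(±1) = 0 for ν = 0,…,n−1, and for ν = n, n+1, …, n+i one has ψ_{i,n}^{(ν)}(±1) = L_i^{(ν−n)}(±1) = (±1)^{i+n−ν} / (2^{ν−n} (ν−n)!) · (i+ν−n)!/(i−ν+n)!. -/
open MeasureTheory Polynomial

/-! By Rodrigues' formula `L_i = (2^i i!)⁻¹ D^i (x² - 1)^i`, and the `n`-th primitive of `L_i`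
based at `-1` is `(2^i i!)⁻¹ D^{i-n} (x² - 1)^i`: this polynomial is divisible by `(x² - 1)^n`,
so it vanishes at `-1`. Hence for `ν < n` the `ν`-th derivative of `ψ_{i,n}` is `ψ_{i,n-ν}`,
which vanishes at `±1`, while for `ν ≥ n` it is `L_i^{(ν-n)}`. Writing
`(x² - 1)^i = (x - ε)^i (x + ε)^i` with `ε = ±1`, only one term of the Leibniz rule survives
at `x = ε`, which gives the closed form. -/

theorem Polynomial.iteratedDeriv_eval {𝕜 : Type*} [NontriviallyNormedField 𝕜] (p : 𝕜[X])
    (k : ℕ) : iteratedDeriv k (fun x => p.eval x) = fun x => (derivative^[k] p).eval x := by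
  induction k generalizing p with
  | zero => simp
  | succ k ih =>
    have hderiv : _root_.deriv (fun x => p.eval x) = fun x => p.derivative.eval x := by
      ext; exact p.deriv
    rw [iteratedDeriv_succ', hderiv, ih, Function.iterate_succ_apply]

theorem Polynomial.eval_iterate_derivative_X_sub_C_pow_mul {R : Type*} [CommRing R] (a : R)
    (q : R[X]) (i k : ℕ) :
    (derivative^[i + k] ((X - C a) ^ i * q)).eval a =
      ((i + k).choose k * i.factorial : ℕ) * (derivative^[k] q).eval a := by
  rw [iterate_derivative_mul, eval_finsetSum,
    Finset.sum_eq_single_of_mem k (Finset.mem_range.mpr (by omega))]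
  · rw [Nat.add_sub_cancel, iterate_derivative_X_sub_pow_self, eval_smul, eval_mul, eval_natCast,
      nsmul_eq_mul]
    push_cast
    ring
  · intro j hj hjk
    rw [iterate_derivative_X_sub_pow, eval_smul, eval_mul, eval_smul, eval_pow, eval_sub, eval_X,
      eval_C, sub_self]
    rcases lt_or_gt_of_ne hjk with hlt | hgt
    · rw [Nat.descFactorial_eq_zero_iff_lt.mpr (by omega), zero_smul, zero_mul, smul_zero]
    · rw [zero_pow (by have := Finset.mem_range.mp hj; omega), smul_zero, zero_mul, smul_zero]

theorem eval_iterate_derivative_leg {ε : ℝ} (hε : ε ^ 2 = 1) {i k : ℕ} (hk : k ≤ i) :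
    (derivative^[k] (leg i)).eval ε =
      ε ^ (i - k) / (2 ^ k * k.factorial) * ((i + k).factorial / (i - k).factorial) := by
  have hfactor : (X ^ 2 - 1 : ℝ[X]) ^ i = (X - C ε) ^ i * (X - C (-ε)) ^ i := by
    rw [← mul_pow,
      show (X - C ε) * (X - C (-ε)) = X ^ 2 - C (ε ^ 2) by rw [C_neg, C_pow]; ring, hε, C_1]
  rw [leg, iterate_derivative_smul, ← Function.iterate_add_apply, add_comm k i, hfactor,
    eval_smul, eval_iterate_derivative_X_sub_C_pow_mul, iterate_derivative_X_sub_pow, eval_smul,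
    eval_pow, eval_sub, eval_X, eval_C, smul_eq_mul, nsmul_eq_mul]
  have hchoose :
      ((i + k).choose k * i.factorial * k.factorial : ℕ) = ((i + k).factorial : ℝ) := by
    rw [Nat.add_choose_mul_factorial_mul_factorial]
  have hdesc : ((i - k).factorial * i.descFactorial k : ℕ) = (i.factorial : ℝ) := by
    rw [Nat.factorial_mul_descFactorial hk]
  have hdesc_ne : (i.descFactorial k : ℝ) ≠ 0 := by
    exact_mod_cast (Nat.descFactorial_eq_zero_iff_lt.not.mpr (by omega))
  have hpow : (2 : ℝ) ^ i = 2 ^ k * 2 ^ (i - k) := by rw [← pow_add, Nat.add_sub_cancel' hk]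
  rw [← hchoose, ← hdesc, hpow, show ε - -ε = 2 * ε by ring, mul_pow]
  push_cast
  field_simp

noncomputable def legPrimitive (i n : ℕ) : ℝ[X] :=
  ((1 : ℝ) / (2 ^ i * i.factorial)) • derivative^[i - n] ((X ^ 2 - 1) ^ i)

theorem legPrimitive_zero (i : ℕ) : legPrimitive i 0 = leg i := by
  simp [legPrimitive, leg]

theorem iterate_derivative_legPrimitive {i n ν : ℕ} (hν : ν ≤ n) (hn : n ≤ i) :
    derivative^[ν] (legPrimitive i n) = legPrimitive i (n - ν) := by
  rw [legPrimitive, legPrimitive, iterate_derivative_smul, ← Function.iterate_add_apply]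
  congr 2
  omega

theorem iterate_derivative_legPrimitive_of_le {i n ν : ℕ} (hν : n ≤ ν) (hn : n ≤ i) :
    derivative^[ν] (legPrimitive i n) = derivative^[ν - n] (leg i) := by
  rw [← Nat.sub_add_cancel hν, Function.iterate_add_apply,
    iterate_derivative_legPrimitive le_rfl hn, Nat.sub_self, legPrimitive_zero, Nat.add_sub_cancel]

theorem legPrimitive_eval_eq_zero {i n : ℕ} (hn₀ : n ≠ 0) (hn : n ≤ i) {x : ℝ}
    (hx : x ^ 2 = 1) : (legPrimitive i n).eval x = 0 := by
  obtain ⟨g, hg⟩ := pow_sub_dvd_iterate_derivative_pow (X ^ 2 - 1 : ℝ[X]) i (i - n)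
  rw [legPrimitive, hg, Nat.sub_sub_self hn, eval_smul, eval_mul, eval_pow, eval_sub, eval_pow,
    eval_X, eval_one, hx, sub_self, zero_pow hn₀, zero_mul, smul_zero]

theorem psi_eq_eval_legPrimitive {i n : ℕ} (hn : n ≤ i) :
    psi i n = fun x => (legPrimitive i n).eval x := by
  induction n with
  | zero => simp [psi, legPrimitive_zero]
  | succ n ih =>
    have hderiv : derivative (legPrimitive i (n + 1)) = legPrimitive i n :=
      iterate_derivative_legPrimitive (ν := 1) (by omega) hn
    ext x
    simp only [psi, ih (by omega)]
    rw [intervalIntegral.integral_eq_sub_of_hasDerivAt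
      (fun t _ => hderiv ▸ (legPrimitive i (n + 1)).hasDerivAt t)
      ((legPrimitive i n).continuous.intervalIntegrable _ _),
      legPrimitive_eval_eq_zero n.succ_ne_zero hn (x := -1) (by norm_num), sub_zero]

/-- Endpoint values of derivatives of the primitives of Legendre
polynomials: for `ν < n`, `ψ_{i,n}^{(ν)}(±1) = 0`; and for `n ≤ ν ≤ n + i`,
`ψ_{i,n}^{(ν)}(±1) = L_i^{(ν−n)}(±1) = (±1)^{i+n−ν}/(2^{ν−n}(ν−n)!) · (i+ν−n)!/(i−ν+n)!`. -/
theorem psi_deriv_endpoint_values (i n : ℕ) (hni : n ≤ i) :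
    (∀ ν < n, iteratedDeriv ν (psi i n) 1 = 0 ∧ iteratedDeriv ν (psi i n) (-1) = 0) ∧
    (∀ ν, n ≤ ν → ν ≤ n + i →
      iteratedDeriv ν (psi i n) 1 = iteratedDeriv (ν - n) (fun x => (leg i).eval x) 1 ∧
      iteratedDeriv ν (psi i n) (-1) = iteratedDeriv (ν - n) (fun x => (leg i).eval x) (-1) ∧
      iteratedDeriv ν (psi i n) 1 =
        1 / (2 ^ (ν - n) * ((ν - n).factorial : ℝ)) *
          (((i + ν - n).factorial : ℝ) / ((i + n - ν).factorial : ℝ)) ∧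
      iteratedDeriv ν (psi i n) (-1) =
        (-1 : ℝ) ^ (i + n - ν) / (2 ^ (ν - n) * ((ν - n).factorial : ℝ)) *
          (((i + ν - n).factorial : ℝ) / ((i + n - ν).factorial : ℝ))) := by
  have hderivs (ν : ℕ) :
      iteratedDeriv ν (psi i n) = fun x => (derivative^[ν] (legPrimitive i n)).eval x := by
    rw [psi_eq_eval_legPrimitive hni, Polynomial.iteratedDeriv_eval]
  refine ⟨fun ν hν => ?_, fun ν hnν hνi => ?_⟩
  · rw [hderivs, iterate_derivative_legPrimitive hν.le hni]
    exact ⟨legPrimitive_eval_eq_zero (by omega) (by omega) (by norm_num),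
      legPrimitive_eval_eq_zero (by omega) (by omega) (by norm_num)⟩
  · obtain ⟨k, rfl⟩ : ∃ k, ν = n + k := ⟨ν - n, by omega⟩
    have hleg : iteratedDeriv (n + k) (psi i n) = iteratedDeriv k (fun x => (leg i).eval x) := by
      rw [hderivs, iterate_derivative_legPrimitive_of_le (by omega) hni,
        Polynomial.iteratedDeriv_eval, Nat.add_sub_cancel_left]
    rw [Nat.add_sub_cancel_left, show i + (n + k) - n = i + k by omega,
      show i + n - (n + k) = i - k by omega, hleg, Polynomial.iteratedDeriv_eval]
    refine ⟨rfl, rfl, ?_, eval_iterate_derivative_leg (by norm_num) (by omega)⟩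
    beta_reduce
    rw [eval_iterate_derivative_leg (ε := 1) (by norm_num) (by omega), one_pow]
end

section
/- Let i, n ∈ ℕ with i ≥ n ≥ 1. Then the primitives of the Legendre polynomials satisfy the recurrence ψ_{i,n} = (ψ_{i+1,n−1} − ψ_{i−1,n−1})/(2i+1), and consequently ψ_{i,n} lies in the span Λ_{i−n}^{i+n} = span{L_{i−n}, …, L_{i+n}}. Moreover, for 0 ≤ ν ≤ n and i ≥ n, the ν-th derivative satisfies ψ_{i,n}^{(ν)} = ψ_{i,n−ν}, and in particular ψ_{i,n}^{(n)} = L_i. -/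
open MeasureTheory Polynomial

section Aux
open Polynomial


lemma iterD_add (k : ℕ) (p q : Polynomial ℝ) :
    derivative^[k] (p + q) = derivative^[k] p + derivative^[k] q := by
  induction k generalizing p q with
  | zero => rfl
  | succ k ih =>
    rw [Function.iterate_succ_apply, derivative_add, ih, ← Function.iterate_succ_apply,
      ← Function.iterate_succ_apply]

lemma iterD_smul (k : ℕ) (c : ℝ) (p : Polynomial ℝ) :
    derivative^[k] (c • p) = c • derivative^[k] p := by
  induction k generalizing p with
  | zero => rfl
  | succ k ih =>
    rw [Function.iterate_succ_apply, derivative_smul, ih, ← Function.iterate_succ_apply]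

lemma iterD_X_mul (k : ℕ) (p : Polynomial ℝ) :
    derivative^[k+1] (X * p) =
      X * derivative^[k+1] p + ((k:ℝ)+1) • derivative^[k] p := by
  induction k generalizing p with
  | zero => simp [derivative_mul]; ring
  | succ k ih =>
    rw [Function.iterate_succ_apply, derivative_mul, derivative_X, one_mul, iterD_add,
      ih (derivative p), ← Function.iterate_succ_apply, ← Function.iterate_succ_apply]
    simp only [Nat.succ_eq_add_one]
    push_cast
    module

lemma C_two : (C (2:ℝ)) = 2 := map_ofNat C 2

noncomputable def fn (n : ℕ) : Polynomial ℝ := ((X:Polynomial ℝ) ^ 2 - 1) ^ n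

lemma fn_deriv (n : ℕ) : derivative (fn (n+1)) = (2*((n:ℝ)+1)) • (X * fn n) := by
  simp only [fn, derivative_pow, smul_eq_C_mul]
  push_cast
  simp only [derivative_sub, derivative_one, derivative_X_pow]
  push_cast
  simp only [C_add, C_mul, C_1, C_two]
  ring

lemma idA (n : ℕ) : derivative^[n+2] (fn (n+1)) =
    (2*((n:ℝ)+1)) • (X * derivative^[n+1] (fn n) + ((n:ℝ)+1) • derivative^[n] (fn n)) := by
  rw [show n+2 = (n+1)+1 from rfl, Function.iterate_succ_apply, fn_deriv, iterD_smul,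
    iterD_X_mul]

lemma idB (n : ℕ) : X * derivative^[n+2] (fn (n+1)) =
    ((n:ℝ)+1) • derivative^[n+1] (fn (n+1)) + (2*((n:ℝ)+1)) • derivative^[n+1] (fn n) := by
  have hB : X * derivative (fn (n+1)) = (2*((n:ℝ)+1)) • (fn (n+1) + fn n) := by
    rw [fn_deriv]
    simp only [fn, smul_eq_C_mul]
    ring
  have h1 := congrArg (derivative^[n+1]) hB
  rw [iterD_smul, iterD_add, iterD_X_mul, ← Function.iterate_succ_apply,
    ← Function.iterate_succ_apply] at h1
  simp only [Nat.succ_eq_add_one] at h1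
  rw [show n+1+1 = n+2 from rfl] at h1
  simp only [smul_eq_C_mul, mul_add, C_add, C_mul, C_1, C_two] at h1 ⊢
  linear_combination h1

lemma leg_deriv_eq (k : ℕ) :
    derivative (leg k) = ((1:ℝ) / (2 ^ k * k.factorial)) • derivative^[k+1] (fn k) := by
  rw [leg, derivative_smul, ← Function.iterate_succ_apply' (fun p => derivative p) k]
  rfl

lemma cst_fact1 (m : ℕ) :
    ((1:ℝ) / (2 ^ (m+2) * (m+2).factorial)) * (2*((m:ℝ)+2) * (2*(m:ℝ)+3)) =
      (2*(m:ℝ)+3) * ((1:ℝ) / (2 ^ (m+1) * (m+1).factorial)) := by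
  have h2 : ((m+1).factorial : ℝ) ≠ 0 := by positivity
  simp only [Nat.factorial_succ]
  push_cast
  field_simp
  ring

lemma cst_fact2 (m : ℕ) :
    ((1:ℝ) / (2 ^ (m+2) * (m+2).factorial)) * (2*((m:ℝ)+2) * (2*((m:ℝ)+1))) =
      (1:ℝ) / (2 ^ m * m.factorial) := by
  have h2 : (m.factorial : ℝ) ≠ 0 := by positivity
  simp only [Nat.factorial_succ]
  push_cast
  field_simp
  ring

lemma legD_rec (m : ℕ) :
    derivative (leg (m+2)) = derivative (leg m) + (2*(m:ℝ)+3) • leg (m+1) := by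
  have key : derivative^[m+3] (fn (m+2)) =
      (2*((m:ℝ)+2) * (2*(m:ℝ)+3)) • derivative^[m+1] (fn (m+1))
        + (2*((m:ℝ)+2) * (2*((m:ℝ)+1))) • derivative^[m+1] (fn m) := by
    have hA := idA (m+1)
    have hB := idB m
    rw [show m+1+2 = m+3 from rfl] at hA
    push_cast at hA hB
    rw [hA, hB]
    module
  rw [leg_deriv_eq, leg_deriv_eq, show m+2+1 = m+3 from rfl, key, smul_add, smul_smul, smul_smul,
    cst_fact1 m, cst_fact2 m, ← smul_smul, leg]
  simp only [fn]
  abel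

lemma leg_eval_neg_one (n : ℕ) : (leg n).eval (-1) = (-1)^n := by
  have hfac : ((X:Polynomial ℝ)^2 - 1)^n = (X - C 1)^n * (X + C 1)^n := by
    rw [← mul_pow]
    congr 1
    simp only [C_1]
    ring
  rw [leg, eval_smul, hfac, iterate_derivative_mul, eval_finset_sum]
  have hcalc : ∀ k ∈ Finset.range (n+1),
      eval (-1) ((n.choose k) • (derivative^[n-k] ((X - C 1)^n) * derivative^[k] ((X + C 1)^n)))
        = if k = n then ((-2:ℝ))^n * n.factorial else 0 := by
    intro k hk
    rw [Finset.mem_range] at hk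
    rw [iterate_derivative_X_sub_pow, iterate_derivative_X_add_pow]
    by_cases h : k = n
    · subst h
      simp [Nat.descFactorial_self]
      ring_nf
      norm_num [Nat.descFactorial_self]
    · have hkn : 0 < n - k := by omega
      simp [h]
      omega
  rw [Finset.sum_congr rfl hcalc, Finset.sum_ite_eq' (Finset.range (n+1)) n]
  simp only [Finset.mem_range, lt_add_iff_pos_right, Nat.lt_irrefl, if_pos (Nat.lt_succ_self n)]
  have hfn : (n.factorial : ℝ) ≠ 0 := by positivity
  rw [if_pos Nat.zero_lt_one, smul_eq_mul]
  rw [show ((-2:ℝ))^n = (-1)^n * 2^n by rw [show (-2:ℝ) = -1 * 2 by norm_num, mul_pow]]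
  field_simp

lemma psi_cont (i n : ℕ) : Continuous (psi i n) := by
  induction n with
  | zero => exact (leg i).continuous
  | succ n ih =>
    have h : ∀ x : ℝ, HasDerivAt (psi i (n+1)) (psi i n x) x := by
      intro x
      exact intervalIntegral.integral_hasDerivAt_right
        (ih.intervalIntegrable _ _)
        (ih.stronglyMeasurable.stronglyMeasurableAtFilter)
        ih.continuousAt
    exact continuous_iff_continuousAt.2 fun x => (h x).continuousAt

lemma psi_hasDerivAt (i n : ℕ) (x : ℝ) : HasDerivAt (psi i (n+1)) (psi i n x) x :=
  intervalIntegral.integral_hasDerivAt_right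
    ((psi_cont i n).intervalIntegrable _ _)
    ((psi_cont i n).stronglyMeasurable.stronglyMeasurableAtFilter)
    (psi_cont i n).continuousAt

lemma psi_deriv (i n : ℕ) : deriv (psi i (n+1)) = psi i n :=
  funext fun x => (psi_hasDerivAt i n x).deriv

lemma leg_prim (m : ℕ) (x : ℝ) :
    ∫ t in (-1:ℝ)..x, (leg (m+1)).eval t =
      ((leg (m+2)).eval x - (leg m).eval x) / (2*((m:ℝ)+1)+1) := by
  set q : Polynomial ℝ := ((2*(m:ℝ)+3)⁻¹) • (leg (m+2) - leg m) with hq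
  have hne : (2*(m:ℝ)+3) ≠ 0 := by positivity
  have hdq : derivative q = leg (m+1) := by
    rw [hq, derivative_smul, derivative_sub, legD_rec m]
    rw [show derivative (leg m) + (2*(m:ℝ)+3) • leg (m+1) - derivative (leg m)
      = (2*(m:ℝ)+3) • leg (m+1) by abel]
    rw [smul_smul, inv_mul_cancel₀ hne, one_smul]
  have hint : ∫ t in (-1:ℝ)..x, (leg (m+1)).eval t = q.eval x - q.eval (-1) := by
    have := intervalIntegral.integral_eq_sub_of_hasDerivAt
      (f := fun t => q.eval t) (f' := fun t => (leg (m+1)).eval t) (a := (-1:ℝ)) (b := x)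
      (fun t _ => by simpa [hdq] using q.hasDerivAt t)
      ((leg (m+1)).continuous.intervalIntegrable _ _)
    exact this
  have hq1 : q.eval (-1) = 0 := by
    rw [hq]
    simp only [eval_smul, eval_sub, leg_eval_neg_one, smul_eq_mul]
    rw [show ((-1:ℝ))^(m+2) = (-1)^m by rw [pow_add]; norm_num]
    ring
  rw [hint, hq1, hq, sub_zero]
  simp only [eval_smul, eval_sub, smul_eq_mul]
  rw [inv_mul_eq_div]
  congr 1
  ring

lemma psi_rec (m : ℕ) : ∀ n, 1 ≤ n → ∀ x : ℝ,
    psi (m+1) n x = (psi (m+2) (n-1) x - psi m (n-1) x) / (2*((m:ℝ)+1)+1) := by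
  intro n hn
  induction n, hn using Nat.le_induction with
  | base =>
    intro x
    have : psi (m+1) 1 x = ∫ t in (-1:ℝ)..x, (leg (m+1)).eval t := rfl
    rw [this, leg_prim]
    rfl
  | succ n hn ih =>
    intro x
    obtain ⟨k, rfl⟩ : ∃ k, n = k + 1 := ⟨n - 1, by omega⟩
    have h1 : psi (m+1) (k+1+1) x = ∫ t in (-1:ℝ)..x, psi (m+1) (k+1) t := rfl
    rw [h1, intervalIntegral.integral_congr (g := fun t =>
        (psi (m+2) k t - psi m k t) / (2*((m:ℝ)+1)+1)) (fun t _ => ih t)]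
    rw [intervalIntegral.integral_div, intervalIntegral.integral_sub
      ((psi_cont (m+2) k).intervalIntegrable _ _) ((psi_cont m k).intervalIntegrable _ _)]
    rfl

lemma psi_span : ∀ n i, n ≤ i → inLegSpan (i - n) (i + n) (psi i n) := by
  intro n
  induction n with
  | zero =>
    intro i _
    refine ⟨fun m => if m = i then 1 else 0, fun x => ?_⟩
    simp [Finset.Icc_self, psi]
  | succ n ih =>
    intro i hi
    obtain ⟨m, rfl⟩ : ∃ m, i = m + 1 := ⟨i - 1, by omega⟩
    obtain ⟨c1, hc1⟩ := ih (m + 2) (by omega)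
    obtain ⟨c2, hc2⟩ := ih m (by omega)
    set S1 := Finset.Icc (m + 2 - n) (m + 2 + n) with hS1
    set S2 := Finset.Icc (m - n) (m + n) with hS2
    set S := Finset.Icc (m + 1 - (n + 1)) (m + 1 + (n + 1)) with hS
    have hsub1 : S1 ⊆ S := by
      intro a ha
      simp only [hS1, hS, Finset.mem_Icc] at *
      omega
    have hsub2 : S2 ⊆ S := by
      intro a ha
      simp only [hS2, hS, Finset.mem_Icc] at *
      omega
    refine ⟨fun a => ((if a ∈ S1 then c1 a else 0) - (if a ∈ S2 then c2 a else 0))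
      / (2*((m:ℝ)+1)+1), fun x => ?_⟩
    have e1 : ∑ a ∈ S, (if a ∈ S1 then c1 a else 0) * (leg a).eval x
        = ∑ a ∈ S1, c1 a * (leg a).eval x := by
      rw [← Finset.sum_subset hsub1 (fun a _ ha => by simp [ha])]
      exact Finset.sum_congr rfl fun a ha => by simp [ha]
    have e2 : ∑ a ∈ S, (if a ∈ S2 then c2 a else 0) * (leg a).eval x
        = ∑ a ∈ S2, c2 a * (leg a).eval x := by
      rw [← Finset.sum_subset hsub2 (fun a _ ha => by simp [ha])]
      exact Finset.sum_congr rfl fun a ha => by simp [ha]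
    have hrec := psi_rec m (n + 1) (by omega) x
    simp only [Nat.add_sub_cancel] at hrec
    rw [hrec, hc1, hc2, ← e1, ← e2]
    rw [div_eq_iff (by positivity : (2*((m:ℝ)+1)+1) ≠ 0), Finset.sum_mul,
      ← Finset.sum_sub_distrib, ← hS]
    refine Finset.sum_congr rfl fun a _ => ?_
    by_cases h1 : a ∈ S1 <;> by_cases h2 : a ∈ S2 <;>
      simp only [h1, h2, if_true, if_false, sub_zero, zero_sub, zero_div] <;>
      field_simp <;> ring

lemma psi_iterDeriv (i n ν : ℕ) (h : ν ≤ n) : iteratedDeriv ν (psi i n) = psi i (n - ν) := by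
  induction ν with
  | zero => simp [iteratedDeriv_zero]
  | succ ν ih =>
    rw [iteratedDeriv_succ, ih (by omega)]
    obtain ⟨k, hk⟩ : ∃ k, n - ν = k + 1 := ⟨n - (ν + 1), by omega⟩
    rw [hk, psi_deriv, show k = n - (ν + 1) by omega]

end Aux

/-- For `i ≥ n ≥ 1` the primitives of the Legendre polynomials satisfy the
recurrence `ψ_{i,n} = (ψ_{i+1,n−1} − ψ_{i−1,n−1})/(2i+1)`, hence `ψ_{i,n} ∈ Λ_{i−n}^{i+n}`;
moreover `ψ_{i,n}^{(ν)} = ψ_{i,n−ν}` for `0 ≤ ν ≤ n`, and in particular `ψ_{i,n}^{(n)} = L_i`. -/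
theorem psi_recurrence_span_deriv (i n : ℕ) (hn : 1 ≤ n) (hni : n ≤ i) :
    (∀ x : ℝ,
      psi i n x = (psi (i + 1) (n - 1) x - psi (i - 1) (n - 1) x) / (2 * (i : ℝ) + 1)) ∧
    inLegSpan (i - n) (i + n) (psi i n) ∧
    (∀ ν ≤ n, iteratedDeriv ν (psi i n) = psi i (n - ν)) ∧
    iteratedDeriv n (psi i n) = fun x => (leg i).eval x := by
  obtain ⟨m, rfl⟩ : ∃ m, i = m + 1 := ⟨i - 1, by omega⟩
  refine ⟨fun x => ?_, psi_span n (m + 1) hni, fun ν hν => psi_iterDeriv _ n ν hν, ?_⟩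
  · have := psi_rec m n hn x
    rw [this]
    push_cast
    norm_num
  · rw [psi_iterDeriv _ n n le_rfl, Nat.sub_self]
    rfl
end
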